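/- Let X be a compact Hausdorff space, T : X → X a continuous map with topological entropy h(T) = 0, and x₀ ∈ X a point whose forward orbit {Tⁿx₀ : n ∈ ℕ} is dense in X. Then there exists a continuous surjection π : E₀(ℕ) → X such that π ∘ A = T ∘ π and π(ι(0)) = x₀. -/

import Mathlib

open Filter Set Topology

namespace Anqie

variable {X : Type*} [TopologicalSpace X]

/-- `𝒰` is an open cover of `X`. -/
def IsOpenCover (𝒰 : Set (Set X)) : Prop :=
  (∀ U ∈ 𝒰, IsOpen U) ∧ ⋃₀ 𝒰 = Set.univ

/-- The common refinement `𝒰 ∨ T⁻¹ 𝒰 ∨ ⋯ ∨ T^{-(n-1)} 𝒰`. -/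
def iterJoin (T : X → X) (𝒰 : Set (Set X)) (n : ℕ) : Set (Set X) :=
  {V | ∃ u : Fin n → Set X, (∀ j, u j ∈ 𝒰) ∧ V = ⋂ j : Fin n, T^[(j : ℕ)] ⁻¹' u j}

/-- The minimal cardinality of a finite subcover of `𝒱` (junk value `0` if none exists). -/
noncomputable def coverNum (𝒱 : Set (Set X)) : ℕ :=
  sInf {k | ∃ F : Finset (Set X), (↑F : Set (Set X)) ⊆ 𝒱 ∧
    ⋃₀ (↑F : Set (Set X)) = Set.univ ∧ F.card = k}

/-- The Adler–Konheim–McAndrew entropy of `T` relative to the open cover `𝒰`. -/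
noncomputable def coverEntropy (T : X → X) (𝒰 : Set (Set X)) : EReal :=
  Filter.atTop.limsup fun n : ℕ =>
    ((Real.log (coverNum (iterJoin T 𝒰 n)) / n : ℝ) : EReal)

/-- The Adler–Konheim–McAndrew topological entropy of `T`, via open covers. -/
noncomputable def entropy (T : X → X) : EReal :=
  ⨆ 𝒰 ∈ {𝒰 : Set (Set X) | IsOpenCover 𝒰}, coverEntropy T 𝒰

/-- The set of forward-orbit sequences of `f : ℕ → X` inside `X^ℕ`. -/
def orbitSet (f : ℕ → X) : Set (ℕ → X) :=
  {ω | ∃ n : ℕ, ∀ k : ℕ, ω k = f (n + k)}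

/-- `X_f`, the closure of the set of orbit sequences in the product topology. -/
def orbitClosure (f : ℕ → X) : Set (ℕ → X) := closure (orbitSet f)

lemma shift_mem_orbitClosure (f : ℕ → X) {ω : ℕ → X} (hω : ω ∈ orbitClosure f) :
    (fun k => ω (k + 1)) ∈ orbitClosure f := by
  have hcont : Continuous fun ω : ℕ → X => fun k => ω (k + 1) :=
    continuous_pi fun k => continuous_apply (k + 1)
  have hmaps : MapsTo (fun ω : ℕ → X => fun k => ω (k + 1)) (orbitSet f) (orbitSet f) := by
    rintro ω ⟨n, hn⟩
    refine ⟨n + 1, fun k => ?_⟩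
    show ω (k + 1) = f (n + 1 + k)
    rw [hn (k + 1)]; congr 1; omega
  exact map_mem_closure hcont hω hmaps

/-- `B_f`, the left shift restricted to `X_f`. -/
def shiftOn (f : ℕ → X) : orbitClosure f → orbitClosure f :=
  fun ω => ⟨fun k => (ω : ℕ → X) (k + 1), shift_mem_orbitClosure f ω.2⟩

/-- The anqie entropy of a map `f : ℕ → X`: the AKM topological entropy of the
left shift on `X_f`. -/
noncomputable def AE (f : ℕ → X) : EReal := entropy (shiftOn f)

end Anqie

namespace Anqie

/-- The elements of `E₀`: bounded arithmetic functions with zero anqie entropy. -/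
abbrev E0sub : Type := {f : BoundedContinuousFunction ℕ ℂ // AE ⇑f = 0}

/-- The character space (maximal ideal space) `E₀(ℕ)` of the commutative unital
C*-algebra `E₀`: nonzero multiplicative linear functionals on `E₀`, as a subset of
`E₀ → ℂ` with the topology of pointwise (weak*) convergence. -/
def CharSpace : Set (E0sub → ℂ) :=
  {φ | (∃ f, φ f ≠ 0) ∧
    (∀ f g h : E0sub, (h : BoundedContinuousFunction ℕ ℂ) =
      (f : BoundedContinuousFunction ℕ ℂ) + g → φ h = φ f + φ g) ∧
    (∀ (c : ℂ) (f g : E0sub), (g : BoundedContinuousFunction ℕ ℂ) =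
      c • (f : BoundedContinuousFunction ℕ ℂ) → φ g = c * φ f) ∧
    (∀ f g h : E0sub, (h : BoundedContinuousFunction ℕ ℂ) =
      (f : BoundedContinuousFunction ℕ ℂ) * g → φ h = φ f * φ g)}

end Anqie

namespace Anqie

lemma entropy_of_subsingleton {Y : Type*} [TopologicalSpace Y] [Nonempty Y]
    [Subsingleton Y] (T : Y → Y) : entropy T = 0 := by
  have key : ∀ 𝒰 : Set (Set Y), IsOpenCover 𝒰 → coverEntropy T 𝒰 = 0 := by
    intro 𝒰 h𝒰
    have hnum : ∀ n : ℕ, coverNum (iterJoin T 𝒰 n) ≤ 1 := by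
      intro n
      obtain ⟨y⟩ := ‹Nonempty Y›
      obtain ⟨U, hU𝒰, hyU⟩ : ∃ U ∈ 𝒰, y ∈ U := by
        have : y ∈ ⋃₀ 𝒰 := h𝒰.2 ▸ Set.mem_univ y
        exact this
      have hUuniv : U = Set.univ := by
        apply Set.eq_univ_of_forall
        intro z
        rwa [Subsingleton.elim z y]
      have hmem : (Set.univ : Set Y) ∈ iterJoin T 𝒰 n := by
        refine ⟨fun _ => U, fun _ => hU𝒰, ?_⟩
        rw [hUuniv]
        simp
      apply Nat.sInf_le
      refine ⟨{Set.univ}, ?_, ?_, ?_⟩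
      · simpa using hmem
      · simp
      · simp
    have hfun : (fun n : ℕ =>
        ((Real.log (coverNum (iterJoin T 𝒰 n)) / n : ℝ) : EReal)) = fun _ => (0 : EReal) := by
      funext n
      have h01 := Nat.le_one_iff_eq_zero_or_eq_one.mp (hnum n)
      rcases h01 with h | h <;> simp [h]
    rw [coverEntropy, hfun]
    exact Filter.limsup_const 0
  have hcover : IsOpenCover ({Set.univ} : Set (Set Y)) := by
    constructor
    · intro U hU
      simp only [Set.mem_singleton_iff] at hU
      subst hU
      exact isOpen_univ
    · simp
  apply le_antisymm
  · apply iSup₂_le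
    intro 𝒰 h𝒰
    exact le_of_eq (key 𝒰 h𝒰)
  · have : (0 : EReal) = coverEntropy T {Set.univ} := (key _ hcover).symm
    rw [this]
    exact le_iSup₂ (f := fun 𝒰 (_ : 𝒰 ∈ {𝒰 : Set (Set Y) | IsOpenCover 𝒰}) =>
      coverEntropy T 𝒰) ({Set.univ} : Set (Set Y)) hcover

lemma orbitSet_const (c : ℂ) : orbitSet (fun _ : ℕ => c) = {fun _ => c} := by
  ext ω
  simp only [orbitSet, Set.mem_setOf_eq, Set.mem_singleton_iff]
  constructor
  · rintro ⟨n, hn⟩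
    exact funext hn
  · rintro rfl
    exact ⟨0, fun k => rfl⟩

lemma AE_const (c : ℂ) : AE (fun _ : ℕ => c) = 0 := by
  have hset : orbitClosure (fun _ : ℕ => c) = {fun _ => c} := by
    rw [orbitClosure, orbitSet_const, closure_singleton]
  haveI : Subsingleton ↥(orbitClosure (fun _ : ℕ => c)) := by
    rw [hset]
    exact Set.subsingleton_singleton.coe_sort
  haveI : Nonempty ↥(orbitClosure (fun _ : ℕ => c)) :=
    ⟨⟨_, subset_closure ⟨0, fun k => rfl⟩⟩⟩
  exact entropy_of_subsingleton _

end Anqie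

namespace Anqie

/-- The evaluation character `ι(n) : f ↦ f(n)`, as a point of `E₀(ℕ)`. -/
noncomputable def evalChar (n : ℕ) : ↥CharSpace :=
  ⟨fun f => (f : BoundedContinuousFunction ℕ ℂ) n, by
    refine ⟨⟨⟨1, ?_⟩, ?_⟩, ?_, ?_, ?_⟩
    · rw [BoundedContinuousFunction.coe_one]
      exact AE_const 1
    · simp
    · rintro f g h hfg
      show (h : BoundedContinuousFunction ℕ ℂ) n =
        (f : BoundedContinuousFunction ℕ ℂ) n + (g : BoundedContinuousFunction ℕ ℂ) n
      rw [hfg]; simp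
    · rintro c f g hfg
      show (g : BoundedContinuousFunction ℕ ℂ) n = c * (f : BoundedContinuousFunction ℕ ℂ) n
      rw [hfg]; simp [smul_eq_mul]
    · rintro f g h hfg
      show (h : BoundedContinuousFunction ℕ ℂ) n =
        (f : BoundedContinuousFunction ℕ ℂ) n * (g : BoundedContinuousFunction ℕ ℂ) n
      rw [hfg]; simp⟩

end Anqie

namespace Anqie

/-- The shift `σ` on `l∞(ℕ)`: `(σ f)(n) = f (n+1)`. -/
noncomputable def shiftBCF (f : BoundedContinuousFunction ℕ ℂ) : BoundedContinuousFunction ℕ ℂ :=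
  f.compContinuous ⟨fun n => n + 1, continuous_of_discreteTopology⟩

end Anqie

/-!
For `u ∈ C(X, ℂ)`, the orbit closure of the sequence `n ↦ u (Tⁿ x₀)` is a factor of `(X, T)`
through `x ↦ (u (Tᵏ x))ₖ`, so its anqie entropy is at most `h(T) = 0`. Hence
`u ↦ (u (Tⁿ x₀))ₙ` is a unital algebra map `C(X, ℂ) → E₀` intertwining composition with `T`
and the shift `σ`. Restricting characters of `E₀` along it and using Gelfand duality for
`C(X, ℂ)` gives `π : E₀(ℕ) → X` with `π ∘ A = T ∘ π` and `π (ι n) = Tⁿ x₀`. It is onto: every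
`x` is `lim_F Tⁿ x₀` for an ultrafilter `F` on `ℕ`, and `f ↦ lim_F f` is a character of `E₀`.
-/

open Function BoundedContinuousFunction

lemma Real.log_natCast_le_log_natCast {a b : ℕ} (h : a ≤ b) : Real.log a ≤ Real.log b := by
  rcases Nat.eq_zero_or_pos a with rfl | ha
  · simpa using Real.log_natCast_nonneg b
  · exact Real.log_le_log (by exact_mod_cast ha) (by exact_mod_cast h)

namespace BoundedContinuousFunction

variable {𝕜 α β δ : Type*} [NormedField 𝕜] [NormedRing β] [NormedAlgebra 𝕜 β]
  [TopologicalSpace α] [TopologicalSpace δ]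

noncomputable def compContinuousAlgHom (g : C(δ, α)) : (α →ᵇ β) →ₐ[𝕜] (δ →ᵇ β) where
  toFun f := f.compContinuous g
  map_one' := rfl
  map_mul' _ _ := rfl
  map_zero' := rfl
  map_add' _ _ := rfl
  commutes' _ := rfl

end BoundedContinuousFunction

namespace ContinuousMap

variable {𝕜 α β : Type*} [NormedField 𝕜] [NormedRing β] [NormedAlgebra 𝕜 β]
  [TopologicalSpace α] [CompactSpace α]

noncomputable def mkOfCompactAlgHom : C(α, β) →ₐ[𝕜] (α →ᵇ β) where
  toFun := BoundedContinuousFunction.mkOfCompact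
  map_one' := rfl
  map_mul' _ _ := rfl
  map_zero' := rfl
  map_add' _ _ := rfl
  commutes' _ := rfl

end ContinuousMap

lemma DenseRange.exists_ultrafilter_tendsto {ι X : Type*} [TopologicalSpace X] {g : ι → X}
    (hg : DenseRange g) (x : X) : ∃ F : Ultrafilter ι, Tendsto g F (𝓝 x) := by
  have : (comap g (𝓝 x)).NeBot := comap_neBot fun t ht => by
    obtain ⟨_, hy, n, rfl⟩ := mem_closure_iff_nhds.mp (hg x) t ht
    exact ⟨n, hy⟩
  exact ⟨Ultrafilter.of _, tendsto_iff_comap.mpr (Ultrafilter.of_le _)⟩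

lemma eq_of_forall_continuousMap_apply_eq {X : Type*} [TopologicalSpace X] [CompactSpace X]
    [T2Space X] {x y : X} (h : ∀ u : C(X, ℂ), u x = u y) : x = y :=
  (WeakDual.CharacterSpace.homeoEval X ℂ).injective (Subtype.ext (ContinuousLinearMap.ext h))

namespace Anqie

section Covers

variable {Y Z : Type*}

lemma iterJoin_preimage_subset {S : Y → Y} {R : Z → Z} {p : Y → Z} (hp : Semiconj p S R)
    (𝒱 : Set (Set Z)) (n : ℕ) :
    iterJoin S (preimage p '' 𝒱) n ⊆ preimage p '' iterJoin R 𝒱 n := by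
  rintro _ ⟨u, hu, rfl⟩
  choose v hv hvu using hu
  refine ⟨_, ⟨v, hv, rfl⟩, ?_⟩
  rw [preimage_iInter]
  refine iInter_congr fun j => ?_
  rw [← hvu, ← preimage_comp, ← preimage_comp, (hp.iterate_right j).comp_eq]

lemma coverNum_le {𝒱 : Set (Set Y)} {F : Finset (Set Y)} (hF : ↑F ⊆ 𝒱)
    (hcov : ⋃₀ (↑F : Set (Set Y)) = univ) : coverNum 𝒱 ≤ F.card :=
  Nat.sInf_le ⟨F, hF, hcov, rfl⟩

lemma coverNum_le_of_surjective {p : Y → Z} (hp : Surjective p) {𝒱 : Set (Set Z)}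
    {F : Finset (Set Y)} (hF : ↑F ⊆ preimage p '' 𝒱) (hcov : ⋃₀ (↑F : Set (Set Y)) = univ) :
    coverNum 𝒱 ≤ F.card := by
  classical
  obtain ⟨G, hG, rfl⟩ := Finset.subset_set_image_iff.mp hF
  rw [Finset.card_image_of_injective _ (preimage_injective.mpr hp)]
  refine coverNum_le hG ((preimage_injective.mpr hp) ?_)
  rw [preimage_sUnion, preimage_univ, ← hcov, Finset.coe_image, sUnion_image]

lemma coverEntropy_mono {S : Y → Y} {R : Z → Z} {𝒰 : Set (Set Y)} {𝒱 : Set (Set Z)}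
    (h : ∀ n, coverNum (iterJoin R 𝒱 n) ≤ coverNum (iterJoin S 𝒰 n)) :
    coverEntropy R 𝒱 ≤ coverEntropy S 𝒰 :=
  limsup_le_limsup <| Eventually.of_forall fun n => EReal.coe_le_coe_iff.mpr <|
    div_le_div_of_nonneg_right (Real.log_natCast_le_log_natCast (h n)) n.cast_nonneg

lemma coverEntropy_univ (T : Y → Y) : coverEntropy T {univ} = 0 := by
  have hnum (n : ℕ) : coverNum (iterJoin T {univ} n) ≤ 1 :=
    coverNum_le (F := {univ}) (by simpa using ⟨fun _ => univ, fun _ => rfl, by simp⟩) (by simp)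
  have hterm (n : ℕ) : ((Real.log (coverNum (iterJoin T {univ} n)) / n : ℝ) : EReal) = 0 := by
    rcases Nat.le_one_iff_eq_zero_or_eq_one.mp (hnum n) with h | h <;> simp [h]
  simp only [coverEntropy, hterm, limsup_const]

end Covers

section Entropy

variable {Y Z : Type*} [TopologicalSpace Y] [TopologicalSpace Z]

lemma IsOpenCover.preimage {𝒱 : Set (Set Z)} (h𝒱 : IsOpenCover 𝒱) {p : Y → Z}
    (hp : Continuous p) : IsOpenCover (preimage p '' 𝒱) := by
  refine ⟨?_, ?_⟩
  · rintro _ ⟨V, hV, rfl⟩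
    exact (h𝒱.1 V hV).preimage hp
  · rw [sUnion_image, ← preimage_iUnion₂, ← sUnion_eq_biUnion, h𝒱.2, preimage_univ]

lemma isOpenCover_iterJoin {T : Y → Y} (hT : Continuous T) {𝒰 : Set (Set Y)}
    (h𝒰 : IsOpenCover 𝒰) (n : ℕ) : IsOpenCover (iterJoin T 𝒰 n) := by
  refine ⟨?_, eq_univ_of_forall fun y => ?_⟩
  · rintro _ ⟨u, hu, rfl⟩
    exact isOpen_iInter_of_finite fun j => (h𝒰.1 _ (hu j)).preimage (hT.iterate _)
  · have hcov : ∀ j : Fin n, ∃ U ∈ 𝒰, T^[j] y ∈ U := fun j =>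
      mem_sUnion.mp (h𝒰.2 ▸ mem_univ (T^[j] y))
    choose u hu hyu using hcov
    exact ⟨_, ⟨u, hu, rfl⟩, mem_iInter.mpr hyu⟩

lemma exists_finset_card_eq_coverNum [CompactSpace Y] {𝒰 : Set (Set Y)} (h𝒰 : IsOpenCover 𝒰) :
    ∃ F : Finset (Set Y), ↑F ⊆ 𝒰 ∧ ⋃₀ (↑F : Set (Set Y)) = univ ∧ F.card = coverNum 𝒰 := by
  obtain ⟨F, hF, hFfin, hcov⟩ := isCompact_univ.elim_finite_subcover_image (b := 𝒰) (c := id) h𝒰.1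
    (by simpa [← sUnion_eq_biUnion] using h𝒰.2.ge)
  have hne : {k | ∃ F : Finset (Set Y), ↑F ⊆ 𝒰 ∧ ⋃₀ (↑F : Set (Set Y)) = univ ∧
      F.card = k}.Nonempty :=
    ⟨_, hFfin.toFinset, by simpa using hF,
      by simpa [← sUnion_eq_biUnion] using univ_subset_iff.mp hcov, rfl⟩
  exact Nat.sInf_mem hne

lemma coverNum_iterJoin_le_of_semiconj [CompactSpace Y] {S : Y → Y} {R : Z → Z} {p : Y → Z}
    (hS : Continuous S) (hp : Continuous p) (hps : Surjective p) (hsemi : Semiconj p S R)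
    {𝒱 : Set (Set Z)} (h𝒱 : IsOpenCover 𝒱) (n : ℕ) :
    coverNum (iterJoin R 𝒱 n) ≤ coverNum (iterJoin S (preimage p '' 𝒱) n) := by
  obtain ⟨F, hF, hcov, hcard⟩ :=
    exists_finset_card_eq_coverNum (isOpenCover_iterJoin hS (h𝒱.preimage hp) n)
  exact hcard ▸ coverNum_le_of_surjective hps (hF.trans (iterJoin_preimage_subset hsemi 𝒱 n)) hcov

lemma le_entropy {T : Y → Y} {𝒰 : Set (Set Y)} (h𝒰 : IsOpenCover 𝒰) :
    coverEntropy T 𝒰 ≤ entropy T :=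
  le_iSup₂ (f := fun 𝒰 (_ : 𝒰 ∈ {𝒰 : Set (Set Y) | IsOpenCover 𝒰}) => coverEntropy T 𝒰) 𝒰 h𝒰

lemma entropy_le_of_semiconj [CompactSpace Y] {S : Y → Y} {R : Z → Z} {p : Y → Z}
    (hS : Continuous S) (hp : Continuous p) (hps : Surjective p) (hsemi : Semiconj p S R) :
    entropy R ≤ entropy S :=
  iSup₂_le fun _ h𝒱 => (coverEntropy_mono
    (coverNum_iterJoin_le_of_semiconj hS hp hps hsemi h𝒱)).trans (le_entropy (h𝒱.preimage hp))

lemma entropy_nonneg (T : Y → Y) : 0 ≤ entropy T :=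
  coverEntropy_univ T ▸ le_entropy ⟨by rintro _ rfl; exact isOpen_univ, sUnion_singleton _⟩

end Entropy

section AnqieEntropy

lemma AE_nonneg {Z : Type*} [TopologicalSpace Z] (f : ℕ → Z) : 0 ≤ AE f :=
  entropy_nonneg _

lemma continuous_shiftOn {Z : Type*} [TopologicalSpace Z] (f : ℕ → Z) :
    Continuous (shiftOn f) :=
  ((continuous_pi fun k => continuous_apply (k + 1)).comp continuous_subtype_val).subtype_mk _

lemma isCompact_orbitClosure (f : ℕ →ᵇ ℂ) : IsCompact (orbitClosure ⇑f) := by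
  have hball : IsCompact (univ.pi fun _ : ℕ => Metric.closedBall (0 : ℂ) ‖f‖) :=
    isCompact_univ_pi fun _ => isCompact_closedBall _ _
  refine hball.of_isClosed_subset isClosed_closure (closure_minimal ?_ hball.isClosed)
  rintro ω ⟨n, hn⟩ k -
  simpa [hn k] using f.norm_coe_le_norm (n + k)

variable {Y : Type*} [TopologicalSpace Y] [CompactSpace Y]

/-- The sequence `q y₀` is a coding of the orbit of `y₀`: its orbit closure is the image of
`q`, a factor of `(Y, S)`. -/
lemma AE_le_entropy_of_semiconj {S : Y → Y} (hS : Continuous S) {q : Y → ℕ → ℂ}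
    (hq : Continuous q) (hqS : ∀ y k, q (S y) k = q y (k + 1)) {y₀ : Y}
    (hy₀ : DenseRange fun n => S^[n] y₀) : AE (q y₀) ≤ entropy S := by
  have hiter (n : ℕ) : ∀ y k, q (S^[n] y) k = q y (n + k) := by
    induction n with
    | zero => simp
    | succ n ih => intro y k; rw [iterate_succ_apply, ih, hqS, add_right_comm]
  have horbit : orbitSet (q y₀) = range (q ∘ fun n => S^[n] y₀) := by
    ext ω
    simp only [orbitSet, mem_ofPred_eq, mem_range, Function.comp_apply, funext_iff, hiter, eq_comm]
  have hclosure : orbitClosure (q y₀) = range q := by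
    have hcompact : IsCompact (closure (range fun n => S^[n] y₀)) :=
      hy₀.closure_range ▸ isCompact_univ
    rw [orbitClosure, horbit, range_comp, ← image_closure_of_isCompact hcompact hq.continuousOn,
      hy₀.closure_range, image_univ]
  refine entropy_le_of_semiconj (p := fun y => ⟨q y, hclosure ▸ mem_range_self y⟩) hS
    (hq.subtype_mk _) ?_ (fun y => Subtype.ext (funext (hqS y)))
  rintro ⟨ω, hω⟩
  obtain ⟨y, rfl⟩ := hclosure ▸ hω
  exact ⟨y, rfl⟩

lemma AE_comp_add_one_le (f : ℕ →ᵇ ℂ) : AE (fun n => f (n + 1)) ≤ AE ⇑f := by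
  have := isCompact_iff_compactSpace.mp (isCompact_orbitClosure f)
  let y₀ : orbitClosure ⇑f := ⟨f, subset_closure ⟨0, fun k => by rw [zero_add]⟩⟩
  have hiter (n : ℕ) : ((shiftOn ⇑f)^[n] y₀ : ℕ → ℂ) = fun k => f (n + k) := by
    induction n with
    | zero => simp [y₀]
    | succ n ih =>
      ext k
      rw [iterate_succ_apply']
      change ((shiftOn ⇑f)^[n] y₀ : ℕ → ℂ) (k + 1) = _
      rw [ih, add_right_comm, add_assoc]
  have hdense : DenseRange fun n => (shiftOn ⇑f)^[n] y₀ := by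
    refine IsInducing.subtypeVal.dense_iff.mpr fun ω => ?_
    have horbit : range (Subtype.val ∘ fun n => (shiftOn ⇑f)^[n] y₀) = orbitSet ⇑f := by
      ext ω'
      simp only [mem_range, Function.comp_apply, hiter, orbitSet, mem_ofPred_eq, funext_iff,
        eq_comm]
    rw [← range_comp, horbit]
    exact ω.2
  have hq : Continuous fun (ω : orbitClosure ⇑f) k => (ω : ℕ → ℂ) (k + 1) :=
    (continuous_pi fun k => continuous_apply (k + 1)).comp continuous_subtype_val
  exact (AE_le_entropy_of_semiconj (continuous_shiftOn ⇑f) hq (fun _ _ => rfl) hdense).trans_eq rfl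

lemma AE_comp_iterate_le {T : Y → Y} (hT : Continuous T) {y₀ : Y}
    (hdense : DenseRange fun n => T^[n] y₀) (u : C(Y, ℂ)) :
    AE (fun n => u (T^[n] y₀)) ≤ entropy T :=
  AE_le_entropy_of_semiconj hT (q := fun y k => u (T^[k] y))
    (continuous_pi fun k => u.continuous.comp (hT.iterate k))
    (fun y k => by rw [iterate_succ_apply]) hdense

end AnqieEntropy

noncomputable def oneE0 : E0sub := ⟨1, AE_const 1⟩

noncomputable def shiftE0 (f : E0sub) : E0sub :=
  ⟨shiftBCF f.1, le_antisymm ((AE_comp_add_one_le f.1).trans_eq f.2) (AE_nonneg _)⟩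

lemma coe_shiftE0 (f : E0sub) :
    (shiftE0 f).1 = compContinuousAlgHom (𝕜 := ℂ) ⟨(· + 1), continuous_of_discreteTopology⟩ f.1 :=
  rfl

section Characters

variable {φ : E0sub → ℂ}

lemma charSpace_congr (hφ : φ ∈ CharSpace) {f g : E0sub} (h : f.1 = g.1) : φ f = φ g := by
  rw [hφ.2.2.1 1 g f (by rw [one_smul, h]), one_mul]

lemma charSpace_apply_one (hφ : φ ∈ CharSpace) : φ oneE0 = 1 := by
  obtain ⟨⟨f, hf⟩, -, -, hmul⟩ := hφ
  exact (mul_left_cancel₀ hf ((mul_one _).trans (hmul f oneE0 f (mul_one _).symm))).symm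

variable {B : Type*} [Semiring B] [Algebra ℂ B]

noncomputable def charSpaceToAlgHom (hφ : φ ∈ CharSpace) (ψ : B →ₐ[ℂ] (ℕ →ᵇ ℂ)) (Φ : B → E0sub)
    (hΦ : ∀ b, (Φ b).1 = ψ b) : B →ₐ[ℂ] ℂ :=
  AlgHom.ofLinearMap
    { toFun := φ ∘ Φ
      map_add' := fun a b => hφ.2.1 (Φ a) (Φ b) (Φ (a + b)) (by simp only [hΦ, map_add])
      map_smul' := fun c a => hφ.2.2.1 c (Φ a) (Φ (c • a)) (by simp only [hΦ, map_smul]) }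
    ((charSpace_congr hφ (by simp only [hΦ, map_one]; rfl)).trans (charSpace_apply_one hφ))
    (fun a b => hφ.2.2.2 (Φ a) (Φ b) (Φ (a * b)) (by simp only [hΦ, map_mul]))

lemma comp_mem_charSpace (hφ : φ ∈ CharSpace) (ψ : (ℕ →ᵇ ℂ) →ₐ[ℂ] (ℕ →ᵇ ℂ))
    (Φ : E0sub → E0sub) (hΦ : ∀ f, (Φ f).1 = ψ f.1) : φ ∘ Φ ∈ CharSpace := by
  refine ⟨⟨oneE0, ?_⟩, fun f g h hh => ?_, fun c f g hg => ?_, fun f g h hh => ?_⟩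
  · rw [comp_apply, charSpace_congr hφ (g := oneE0) (by rw [hΦ]; exact map_one ψ),
      charSpace_apply_one hφ]
    exact one_ne_zero
  · exact hφ.2.1 (Φ f) (Φ g) (Φ h) (by rw [hΦ, hΦ, hΦ, hh, map_add])
  · exact hφ.2.2.1 c (Φ f) (Φ g) (by rw [hΦ, hΦ, hg, map_smul])
  · exact hφ.2.2.2 (Φ f) (Φ g) (Φ h) (by rw [hΦ, hΦ, hΦ, hh, map_mul])

end Characters

noncomputable def shiftChar (ω : CharSpace) : CharSpace :=
  ⟨ω.1 ∘ shiftE0, comp_mem_charSpace ω.2 _ shiftE0 coe_shiftE0⟩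

lemma continuous_shiftChar : Continuous shiftChar :=
  Continuous.subtype_mk (f := fun ω : CharSpace => ω.1 ∘ shiftE0)
    (continuous_pi fun f => (continuous_apply (shiftE0 f)).comp continuous_subtype_val) _

lemma exists_tendsto_ultrafilter (F : Ultrafilter ℕ) (f : ℕ →ᵇ ℂ) : ∃ c, Tendsto f F (𝓝 c) := by
  obtain ⟨c, -, hc⟩ := (isCompact_closedBall (0 : ℂ) ‖f‖).ultrafilter_le_nhds (F.map f)
    (by
      rw [Ultrafilter.coe_map, le_principal_iff, mem_map]
      exact univ_mem' fun n => by simpa using f.norm_coe_le_norm n)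
  exact ⟨c, hc⟩

noncomputable def ultrafilterChar (F : Ultrafilter ℕ) : CharSpace := by
  have hlim (f : ℕ →ᵇ ℂ) : Tendsto f F (𝓝 (limUnder F f)) :=
    tendsto_nhds_limUnder (exists_tendsto_ultrafilter F f)
  refine ⟨fun f => limUnder F f.1, ⟨oneE0, ?_⟩, fun f g h hh => ?_, fun c f g hg => ?_,
    fun f g h hh => ?_⟩
  · exact (tendsto_const_nhds (x := (1 : ℂ))).limUnder_eq.trans_ne one_ne_zero
  all_goals refine Tendsto.limUnder_eq ?_
  · rw [hh]; exact (hlim f.1).add (hlim g.1)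
  · rw [hg]; exact (hlim f.1).const_mul c
  · rw [hh]; exact (hlim f.1).mul (hlim g.1)

lemma ultrafilterChar_apply {F : Ultrafilter ℕ} {f : E0sub} {c : ℂ} (h : Tendsto f.1 F (𝓝 c)) :
    (ultrafilterChar F).1 f = c :=
  h.limUnder_eq

section FactorMap

open WeakDual

variable {X : Type*} [TopologicalSpace X] [CompactSpace X] [T2Space X] {T : X → X}
  (hT : Continuous T) (hent : entropy T = 0) {x₀ : X} (hdense : DenseRange fun n => T^[n] x₀)

noncomputable def orbitAlgHom (T : X → X) (x₀ : X) : C(X, ℂ) →ₐ[ℂ] (ℕ →ᵇ ℂ) :=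
  (compContinuousAlgHom ⟨fun n => T^[n] x₀, continuous_of_discreteTopology⟩).comp
    ContinuousMap.mkOfCompactAlgHom

noncomputable def orbitE0 (u : C(X, ℂ)) : E0sub :=
  ⟨orbitAlgHom T x₀ u, le_antisymm ((AE_comp_iterate_le hT hdense u).trans_eq hent) (AE_nonneg _)⟩

/-- The character `u ↦ ω (n ↦ u (Tⁿ x₀))` of `C(X, ℂ)`; by Gelfand duality it is evaluation at
the point `factorMap ω`. -/
noncomputable def toCharacter (ω : CharSpace) : characterSpace ℂ C(X, ℂ) :=
  CharacterSpace.equivAlgHom.symm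
    (charSpaceToAlgHom ω.2 (orbitAlgHom T x₀) (orbitE0 hT hent hdense) fun _ => rfl)

noncomputable def factorMap (ω : CharSpace) : X :=
  (CharacterSpace.homeoEval X ℂ).symm (toCharacter hT hent hdense ω)

lemma apply_factorMap (ω : CharSpace) (u : C(X, ℂ)) :
    u (factorMap hT hent hdense ω) = ω.1 (orbitE0 hT hent hdense u) :=
  congrArg (fun χ : characterSpace ℂ C(X, ℂ) => χ u)
    ((CharacterSpace.homeoEval X ℂ).apply_symm_apply (toCharacter hT hent hdense ω))

lemma continuous_factorMap : Continuous (factorMap hT hent hdense) :=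
  (CharacterSpace.homeoEval X ℂ).symm.continuous.comp <|
    Continuous.subtype_mk (continuous_of_continuous_eval fun u =>
      (continuous_apply (orbitE0 hT hent hdense u)).comp continuous_subtype_val) _

lemma factorMap_shiftChar (ω : CharSpace) :
    factorMap hT hent hdense (shiftChar ω) = T (factorMap hT hent hdense ω) := by
  refine eq_of_forall_continuousMap_apply_eq fun u => ?_
  change _ = u.comp ⟨T, hT⟩ _
  rw [apply_factorMap, apply_factorMap]
  refine charSpace_congr ω.2 (BoundedContinuousFunction.ext fun n => ?_)
  exact congrArg u (iterate_succ_apply' T n x₀)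

lemma factorMap_evalChar (n : ℕ) : factorMap hT hent hdense (evalChar n) = T^[n] x₀ :=
  eq_of_forall_continuousMap_apply_eq fun u => apply_factorMap hT hent hdense _ u

lemma surjective_factorMap : Surjective (factorMap hT hent hdense) := by
  intro x
  obtain ⟨F, hF⟩ := hdense.exists_ultrafilter_tendsto x
  refine ⟨ultrafilterChar F, eq_of_forall_continuousMap_apply_eq fun u => ?_⟩
  rw [apply_factorMap]
  exact ultrafilterChar_apply ((u.continuous.tendsto x).comp hF)

end FactorMap

end Anqie

/-- Let `X` be a compact Hausdorff space, `T : X → X` continuous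
with AKM topological entropy `0`, and `x₀ ∈ X` with dense forward orbit. Then
(with `A : E₀(ℕ) → E₀(ℕ)` the continuous map `ω ↦ ω ∘ σ` induced by the shift),
there is a continuous surjection `π : E₀(ℕ) → X` with `π ∘ A = T ∘ π` and
`π(ι(0)) = x₀`. -/
theorem zero_entropy_transitive_system_is_factor_of_E0 {X : Type*} [TopologicalSpace X]
    [CompactSpace X] [T2Space X] (T : X → X) (hT : Continuous T)
    (hent : Anqie.entropy T = 0) (x0 : X)
    (hdense : Dense (Set.range fun n : ℕ => T^[n] x0)) :
    ∃ A : ↥Anqie.CharSpace → ↥Anqie.CharSpace, Continuous A ∧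
      (∀ (ω : ↥Anqie.CharSpace) (f g : Anqie.E0sub),
        (g : BoundedContinuousFunction ℕ ℂ) =
          Anqie.shiftBCF (f : BoundedContinuousFunction ℕ ℂ) →
        (A ω).1 f = ω.1 g) ∧
      ∃ π : ↥Anqie.CharSpace → X, Continuous π ∧ Function.Surjective π ∧
        π ∘ A = T ∘ π ∧ π (Anqie.evalChar 0) = x0 := by
  open Anqie in
  exact ⟨shiftChar, continuous_shiftChar, fun ω f g hg => charSpace_congr ω.2 hg.symm,
    factorMap hT hent hdense, continuous_factorMap hT hent hdense,
    surjective_factorMap hT hent hdense, funext (factorMap_shiftChar hT hent hdense),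
    factorMap_evalChar hT hent hdense 0⟩
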